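/- arXiv:2605.03954 — 7 statements merged into one kernel-verified Lean document; each statement's English description precedes it below -/
import Mathlib

section
/- In an abstract argumentation framework whose attack relation is symmetric (i.e., (a,b) is an attack iff (b,a) is an attack) and irreflexive, every maximal conflict-free set (naive extension) is admissible. -/
/-- `S` is conflict-free in the AF `(A, R)`. -/
def ConflictFree {A : Type} (R : A → A → Prop) (S : Set A) : Prop :=
  ∀ a ∈ S, ∀ b ∈ S, ¬ R a b

/-- `S` defends the argument `c`. -/
def Defends {A : Type} (R : A → A → Prop) (S : Set A) (c : A) : Prop :=
  ∀ b, R b c → ∃ a ∈ S, R a b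

/-- `S` is admissible. -/
def Admissible {A : Type} (R : A → A → Prop) (S : Set A) : Prop :=
  ConflictFree R S ∧ ∀ c ∈ S, Defends R S c

/-- `S` is a naive extension: a maximal conflict-free set. -/
def Naive {A : Type} (R : A → A → Prop) (S : Set A) : Prop :=
  ConflictFree R S ∧ ∀ S', ConflictFree R S' → S ⊆ S' → S' = S

/-- In a symmetric irreflexive AF, every naive extension is admissible. -/
theorem stmt0 {A : Type} [Fintype A] (R : A → A → Prop)
    (hsym : ∀ a b, R a b ↔ R b a) (hirr : ∀ a, ¬ R a a)
    (S : Set A) (hS : Naive R S) : Admissible R S := by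
  obtain ⟨hcf, hmax⟩ := hS
  refine ⟨hcf, fun c hc b hbc => ?_⟩
  by_contra h
  push_neg at h
  have hbS : b ∉ S := fun hb => hcf b hb c hc hbc
  have hcf' : ConflictFree R (S ∪ {b}) := by
    rintro x (hx | hx) y (hy | hy)
    · exact hcf x hx y hy
    · rw [Set.mem_singleton_iff] at hy; rw [hy]; exact fun hxb => h x hx hxb
    · rw [Set.mem_singleton_iff] at hx; rw [hx]; exact fun hby => h y hy ((hsym y b).mpr hby)
    · rw [Set.mem_singleton_iff] at hx hy; rw [hx, hy]; exact hirr b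
  have := hmax (S ∪ {b}) hcf' (Set.subset_union_left)
  exact hbS (this ▸ Set.mem_union_right S rfl)
end

section
/- In a symmetric, irreflexive argumentation framework, the naive, preferred, and stable extensions coincide: a set S is a naive extension iff it is a preferred extension iff it is a stable extension. -/
def Preferred {A : Type} (R : A → A → Prop) (S : Set A) : Prop :=
  Admissible R S ∧ ∀ S', Admissible R S' → S ⊆ S' → S' = S

def Stable {A : Type} (R : A → A → Prop) (S : Set A) : Prop :=
  ConflictFree R S ∧ ∀ a ∉ S, ∃ b ∈ S, R b a

lemma naive_to_stable {A : Type} (R : A → A → Prop)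
    (hsym : ∀ a b, R a b ↔ R b a) (hirr : ∀ a, ¬ R a a) (S : Set A)
    (h : Naive R S) : Stable R S := by
  obtain ⟨hcf, hmax⟩ := h
  refine ⟨hcf, fun a ha => ?_⟩
  by_contra hno
  push_neg at hno
  have : ConflictFree R (insert a S) := by
    intro x hx y hy hR
    rcases hx with rfl | hx
    · rcases hy with rfl | hy
      · exact hirr _ hR
      · exact hno y hy ((hsym _ y).mp hR)
    · rcases hy with rfl | hy
      · exact hno x hx hR
      · exact hcf x hx y hy hR
  have := hmax _ this (Set.subset_insert a S)
  exact ha (this ▸ Set.mem_insert a S)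

lemma stable_to_naive {A : Type} (R : A → A → Prop) (S : Set A)
    (h : Stable R S) : Naive R S := by
  obtain ⟨hcf, hst⟩ := h
  refine ⟨hcf, fun S' hcf' hsub => ?_⟩
  apply Set.Subset.antisymm _ hsub
  intro x hx
  by_contra hxS
  obtain ⟨b, hb, hRb⟩ := hst x hxS
  exact hcf' b (hsub hb) x hx hRb

lemma exists_max_cf {A : Type} (R : A → A → Prop) (S : Set A)
    (h : ConflictFree R S) :
    ∃ M, S ⊆ M ∧ ConflictFree R M ∧ ∀ T, ConflictFree R T → M ⊆ T → T = M := by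
  obtain ⟨M, hSM, hmax⟩ := zorn_subset_nonempty {T | ConflictFree R T}
    (fun c hc hchain _ => ⟨⋃₀ c, fun a ha b hb => by
      obtain ⟨s, hs, has⟩ := ha
      obtain ⟨t, ht, hbt⟩ := hb
      rcases hchain.total hs ht with hst | hts
      · exact hc ht a (hst has) b hbt
      · exact hc hs a has b (hts hbt), fun s hs => Set.subset_sUnion_of_mem hs⟩) S h
  exact ⟨M, hSM, hmax.1, fun T hT hMT => (hmax.2 hT hMT).antisymm hMT⟩

/-- In a symmetric irreflexive AF, naive, preferred and stable extensions coincide. -/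
theorem stmt1 {A : Type} [Fintype A] (R : A → A → Prop)
    (hsym : ∀ a b, R a b ↔ R b a) (hirr : ∀ a, ¬ R a a) (S : Set A) :
    (Naive R S ↔ Preferred R S) ∧ (Preferred R S ↔ Stable R S) := by
  have naive_adm : ∀ T, Naive R T → Admissible R T := by
    intro T hT
    obtain ⟨hcf, hst⟩ := naive_to_stable R hsym hirr T hT
    refine ⟨hcf, fun c hc b hRbc => ?_⟩
    have hbT : b ∉ T := fun hb => hcf b hb c hc hRbc
    exact hst b hbT
  have np : ∀ T, Naive R T → Preferred R T := by
    intro T hT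
    exact ⟨naive_adm T hT, fun S' hS' hsub => hT.2 S' hS'.1 hsub⟩
  have pn : ∀ T, Preferred R T → Naive R T := by
    intro T hT
    refine ⟨hT.1.1, fun S' hcf' hsub => ?_⟩
    obtain ⟨M, hS'M, hMcf, hMmax⟩ := exists_max_cf R S' hcf'
    have hMnaive : Naive R M := ⟨hMcf, hMmax⟩
    have : M = T := hT.2 M (naive_adm M hMnaive) (hsub.trans hS'M)
    exact (hS'M.trans this.subset).antisymm hsub
  refine ⟨⟨np S, pn S⟩, ⟨fun h => naive_to_stable R hsym hirr S (pn S h),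
    fun h => np S (stable_to_naive R S h)⟩⟩
end

section
/- Let D = ⟨T, C⟩ be a database T (a finite set of facts) with a set C of denial constraints, and let conflicts(D) be the set of minimal inconsistent subsets of T. Define the SETAF S_D with arguments A = T and attacks R = {(E∖{t}, t) : E ∈ conflicts(D), t ∈ E}. Then a subset P ⊆ T is a subset-maximal repair of D (a maximal subset of T containing no conflict) if and only if P is a naive extension of S_D. -/
/-- Conflict-freeness in a SETAF. -/
def SetafConflictFree {A : Type} (R : Set A → A → Prop) (P : Set A) : Prop :=
  ¬ ∃ S a, R S a ∧ S ⊆ P ∧ a ∈ P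

/-- Naive extension of a SETAF: maximal conflict-free set. -/
def SetafNaive {A : Type} (R : Set A → A → Prop) (P : Set A) : Prop :=
  SetafConflictFree R P ∧ ∀ P', SetafConflictFree R P' → P ⊆ P' → P' = P

/-- `P` is consistent: it contains no conflict. -/
def Consistent {T : Type} (conflicts : Set (Set T)) (P : Set T) : Prop :=
  ∀ E ∈ conflicts, ¬ E ⊆ P

/-- A subset-maximal repair: a maximal consistent subset. -/
def Repair {T : Type} (conflicts : Set (Set T)) (P : Set T) : Prop :=
  Consistent conflicts P ∧ ∀ P', Consistent conflicts P' → P ⊆ P' → P' = P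

/-- Attacks of the SETAF `S_D` generated by the conflicts: `(E \ {t}, t)` for `t ∈ E ∈ conflicts`. -/
def AttD {T : Type} (conflicts : Set (Set T)) (S : Set T) (t : T) : Prop :=
  ∃ E ∈ conflicts, t ∈ E ∧ S = E \ {t}


lemma cf_iff {T : Type} (conflicts : Set (Set T))
    (hne : ∀ E ∈ conflicts, E.Nonempty) (P : Set T) :
    Consistent conflicts P ↔ SetafConflictFree (AttD conflicts) P := by
  constructor
  · rintro h ⟨S, a, ⟨E, hE, haE, rfl⟩, hSP, haP⟩
    exact h E hE (fun x hx => by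
      by_cases hxa : x = a
      · exact hxa ▸ haP
      · exact hSP ⟨hx, hxa⟩)
  · intro h E hE hEP
    obtain ⟨t, ht⟩ := hne E hE
    exact h ⟨E \ {t}, t, ⟨E, hE, ht, rfl⟩, fun x hx => hEP hx.1, hEP ht⟩

/-- Repairs of a database under denial constraints coincide with the naive
extensions of the generated SETAF. -/
theorem stmt4 {T : Type} [Fintype T] (conflicts : Set (Set T))
    (hne : ∀ E ∈ conflicts, E.Nonempty)
    (hanti : ∀ E ∈ conflicts, ∀ E' ∈ conflicts, E ⊆ E' → E = E')
    (P : Set T) :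
    Repair conflicts P ↔ SetafNaive (AttD conflicts) P := by
  constructor
  · rintro ⟨hc, hm⟩
    exact ⟨(cf_iff conflicts hne P).1 hc,
      fun P' hP' hPP' => hm P' ((cf_iff conflicts hne P').2 hP') hPP'⟩
  · rintro ⟨hc, hm⟩
    exact ⟨(cf_iff conflicts hne P).2 hc,
      fun P' hP' hPP' => hm P' ((cf_iff conflicts hne P').1 hP') hPP'⟩
end

section
/- With the SETAF S_D constructed from conflicts as above, and under the additional assumption that every conflict has size at least 2, every naive extension of S_D is also a stable extension: every argument outside a maximal conflict-free set P is attacked by some subset of P. -/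
def SetafStable {A : Type} (R : Set A → A → Prop) (P : Set A) : Prop :=
  SetafConflictFree R P ∧ ∀ a ∉ P, ∃ S ⊆ P, R S a

/-- If every conflict has at least two elements, every naive extension of the
SETAF generated by the conflicts is stable. -/
theorem stmt5 {T : Type} [Fintype T] (conflicts : Set (Set T))
    (hsize : ∀ E ∈ conflicts, E.Nontrivial)
    (hanti : ∀ E ∈ conflicts, ∀ E' ∈ conflicts, E ⊆ E' → E = E')
    (P : Set T) (hP : SetafNaive (AttD conflicts) P) :
    SetafStable (AttD conflicts) P := by
  obtain ⟨hcf, hmax⟩ := hP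
  refine ⟨hcf, fun a ha => ?_⟩
  by_contra hno
  push_neg at hno
  -- P ∪ {a} must fail conflict-freeness, else maximality forces a ∈ P
  have hncf : ¬ SetafConflictFree (AttD conflicts) (P ∪ {a}) := by
    intro hcf'
    have := hmax (P ∪ {a}) hcf' (Set.subset_union_left)
    exact ha (this ▸ Set.mem_union_right _ rfl)
  rw [SetafConflictFree] at hncf
  push_neg at hncf
  obtain ⟨S, b, ⟨E, hE, hbE, hSE⟩, hSsub, hbmem⟩ := hncf
  have hEsub : E ⊆ P ∪ {a} := by
    intro x hx
    by_cases hxb : x = b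
    · exact hxb ▸ hbmem
    · exact hSsub (hSE ▸ ⟨hx, hxb⟩)
  by_cases haE : a ∈ E
  · exact hno (E \ {a}) (fun x hx => (hEsub hx.1).resolve_right hx.2) ⟨E, hE, haE, rfl⟩
  · have hEP : E ⊆ P := fun x hx => (hEsub hx).resolve_right (fun h => haE (h ▸ hx))
    exact hcf ⟨S, b, ⟨E, hE, hbE, hSE⟩, hSE ▸ fun x hx => hEP hx.1, hEP hbE⟩
end

section
/- In the SETAF S_D built from conflicts each of size ≥ 2, every naive extension is admissible, hence preferred: naive, preferred and stable extensions of S_D coincide. -/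
def SetafDefends {A : Type} (R : Set A → A → Prop) (P : Set A) (a : A) : Prop :=
  ∀ S, R S a → ∃ S' ⊆ P, ∃ b ∈ S, R S' b

def SetafAdmissible {A : Type} (R : Set A → A → Prop) (P : Set A) : Prop :=
  SetafConflictFree R P ∧ ∀ a ∈ P, SetafDefends R P a

def SetafPreferred {A : Type} (R : Set A → A → Prop) (P : Set A) : Prop :=
  SetafAdmissible R P ∧ ∀ P', SetafAdmissible R P' → P ⊆ P' → P' = P

/-!
A stable extension is admissible (an attacker of a member of `P` cannot lie inside `P`, so it
contains an outsider, which `P` attacks) and naive. Conversely, in `S_D` a naive `P` is stable: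
if `a ∉ P` then `insert a P` contains some conflict `E`, necessarily with `a ∈ E`, and then
`E \ {a} ⊆ P` attacks `a`. So every naive extension is admissible; as every admissible set is
conflict-free and, `T` being finite, every conflict-free set lies in a naive one, the maximal
admissible sets are exactly the maximal conflict-free ones.
-/

open Set

section Setaf

variable {A : Type} {R : Set A → A → Prop} {P : Set A}

theorem setafNaive_iff_maximal : SetafNaive R P ↔ Maximal (SetafConflictFree R) P :=
  ⟨fun h => ⟨h.1, fun _ hQ hPQ => (h.2 _ hQ hPQ).le⟩,
    fun h => ⟨h.1, fun _ hQ hPQ => (h.2 hQ hPQ).antisymm hPQ⟩⟩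

theorem setafPreferred_iff_maximal : SetafPreferred R P ↔ Maximal (SetafAdmissible R) P :=
  ⟨fun h => ⟨h.1, fun _ hQ hPQ => (h.2 _ hQ hPQ).le⟩,
    fun h => ⟨h.1, fun _ hQ hPQ => (h.2 hQ hPQ).antisymm hPQ⟩⟩

theorem SetafStable.setafAdmissible (h : SetafStable R P) : SetafAdmissible R P := by
  refine ⟨h.1, fun a haP S hSa => ?_⟩
  obtain ⟨b, hbS, hbP⟩ : ∃ b ∈ S, b ∉ P := not_subset.mp fun hSP => h.1 ⟨S, a, hSa, hSP, haP⟩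
  obtain ⟨S', hS'P, hS'b⟩ := h.2 b hbP
  exact ⟨S', hS'P, b, hbS, hS'b⟩

theorem SetafStable.setafNaive (h : SetafStable R P) : SetafNaive R P := by
  refine ⟨h.1, fun Q hQ hPQ => hPQ.antisymm' fun a haQ => ?_⟩
  by_contra haP
  obtain ⟨S, hSP, hSa⟩ := h.2 a haP
  exact hQ ⟨S, a, hSa, hSP.trans hPQ, haQ⟩

theorem setafNaive_iff_setafPreferred [Finite A]
    (hadm : ∀ Q, SetafNaive R Q → SetafAdmissible R Q) :
    SetafNaive R P ↔ SetafPreferred R P := by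
  rw [setafNaive_iff_maximal, setafPreferred_iff_maximal]
  constructor
  · intro h
    exact ⟨hadm P (setafNaive_iff_maximal.mpr h), fun Q hQ => h.2 hQ.1⟩
  · intro h
    refine ⟨h.1.1, fun Q hQ hPQ => ?_⟩
    obtain ⟨N, hQN, hN⟩ := Finite.exists_le_maximal hQ
    have hNP : N ≤ P := h.2 (hadm N (setafNaive_iff_maximal.mpr hN)) (hPQ.trans hQN)
    exact hQN.trans hNP

end Setaf

section AttD

variable {T : Type} {conflicts : Set (Set T)} {P : Set T}

-- The quantifier over `t ∈ E` matters: an empty conflict yields no attack.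
theorem setafConflictFree_attD_iff :
    SetafConflictFree (AttD conflicts) P ↔ ∀ E ∈ conflicts, ∀ t ∈ E, ¬ E ⊆ P := by
  constructor
  · intro hcf E hE t htE hEP
    exact hcf ⟨E \ {t}, t, ⟨E, hE, htE, rfl⟩, sdiff_subset.trans hEP, hEP htE⟩
  · rintro h ⟨_, t, ⟨E, hE, htE, rfl⟩, hEP, htP⟩
    exact h E hE t htE (sdiff_singleton_subset_iff.mp hEP |>.trans (insert_subset htP subset_rfl))

theorem SetafNaive.setafStable_attD (h : SetafNaive (AttD conflicts) P) :
    SetafStable (AttD conflicts) P := by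
  refine ⟨h.1, fun a haP => ?_⟩
  have hinsert : ¬ SetafConflictFree (AttD conflicts) (insert a P) := fun hcf =>
    haP (h.2 _ hcf (subset_insert a P) ▸ mem_insert a P)
  simp only [setafConflictFree_attD_iff, not_forall, not_not] at hinsert
  obtain ⟨E, hE, t, htE, hEaP⟩ := hinsert
  have haE : a ∈ E := by
    by_contra haE
    exact setafConflictFree_attD_iff.mp h.1 E hE t htE ((subset_insert_iff_of_notMem haE).mp hEaP)
  exact ⟨E \ {a}, sdiff_singleton_subset_iff.mpr hEaP, E, hE, haE, rfl⟩

end AttD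

theorem stmt6_general {T : Type} [Fintype T] (conflicts : Set (Set T))
    (P : Set T) :
    (SetafNaive (AttD conflicts) P → SetafAdmissible (AttD conflicts) P) ∧
    (SetafNaive (AttD conflicts) P ↔ SetafPreferred (AttD conflicts) P) ∧
    (SetafNaive (AttD conflicts) P ↔ SetafStable (AttD conflicts) P) := by
  have naive_admissible : ∀ Q, SetafNaive (AttD conflicts) Q → SetafAdmissible (AttD conflicts) Q :=
    fun Q hQ => hQ.setafStable_attD.setafAdmissible
  exact ⟨naive_admissible P, setafNaive_iff_setafPreferred naive_admissible,
    SetafNaive.setafStable_attD, SetafStable.setafNaive⟩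

/-- In the SETAF generated by conflicts of size at least two, every naive
extension is admissible, and naive, preferred and stable extensions coincide. -/
theorem stmt6 {T : Type} [Fintype T] (conflicts : Set (Set T))
    (hsize : ∀ E ∈ conflicts, E.Nontrivial)
    (hanti : ∀ E ∈ conflicts, ∀ E' ∈ conflicts, E ⊆ E' → E = E')
    (P : Set T) :
    (SetafNaive (AttD conflicts) P → SetafAdmissible (AttD conflicts) P) ∧
    (SetafNaive (AttD conflicts) P ↔ SetafPreferred (AttD conflicts) P) ∧
    (SetafNaive (AttD conflicts) P ↔ SetafStable (AttD conflicts) P) :=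
  stmt6_general conflicts P
end

section
/- Consider the combined framework: a finite set T, a symmetric irreflexive conflict relation C ⊆ T × T (from FDs), and a support system (T, L, src, supp) with singleton support sets (from IDs). Define the AF with arguments T ∪ {a_{ℓ,s}}, FD-attacks (s,t) and (t,s) for (s,t) ∈ C, and ID-attacks (a_{ℓ,s}, s), (a_{ℓ,s}, a_{ℓ,s}), and (u, a_{ℓ,s}) for u ∈ supp(ℓ,s). Then P ⊆ T is a subset-maximal repair (maximal subset that is independent w.r.t. C and closed w.r.t. the support system) if and only if P is a preferred extension of this AF. -/
/-- Auxiliary arguments `a_{ℓ,s}` for `ℓ ∈ L` and `s ∈ src ℓ`. -/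
def Aux {L T : Type} (src : L → Set T) : Type :=
  {p : L × T // p.2 ∈ src p.1}

/-- Arguments of the combined FD+ID framework: facts plus auxiliary arguments. -/
def CArg {L T : Type} (src : L → Set T) : Type :=
  T ⊕ Aux src

/-- Attacks of the combined FD+ID framework: FD-attacks `(s,t)` for conflicting
facts, ID-attacks `(a_{ℓ,s}, s)`, self-attacks `(a_{ℓ,s}, a_{ℓ,s})`, and
`(u, a_{ℓ,s})` for every single supporting fact `u ∈ supp ℓ s`. -/
def CAtt {L T : Type} (src : L → Set T) (C : T → T → Prop)
    (supp : L → T → Set T) : CArg src → CArg src → Prop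
  | Sum.inl s, Sum.inl t => C s t
  | Sum.inr a, Sum.inl t => t = a.1.2
  | Sum.inl u, Sum.inr a => u ∈ supp a.1.1 a.1.2
  | Sum.inr a, Sum.inr b => a = b

/-- A repair in the combined FD+ID setting: a maximal subset that is
independent w.r.t. the conflict relation and closed w.r.t. the support system. -/
def CRepair {L T : Type} (src : L → Set T) (C : T → T → Prop)
    (supp : L → T → Set T) (P : Set T) : Prop :=
  ((∀ s ∈ P, ∀ t ∈ P, ¬ C s t) ∧ ∀ ℓ, ∀ s ∈ P, s ∈ src ℓ → ∃ u ∈ supp ℓ s, u ∈ P) ∧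
  ∀ P', ((∀ s ∈ P', ∀ t ∈ P', ¬ C s t) ∧
      ∀ ℓ, ∀ s ∈ P', s ∈ src ℓ → ∃ u ∈ supp ℓ s, u ∈ P') → P ⊆ P' → P' = P


/-!
Auxiliary arguments attack themselves, so every conflict-free set of the AF consists of facts
only, i.e. is the image `Sum.inl '' P` of a set of facts. For such images, admissibility is
exactly consistency: defending a fact `t` against a conflicting fact `s` is done by `t` itself
(by symmetry of `C`), and defending `s ∈ src ℓ` against `a_{ℓ,s}` requires a fact of
`supp ℓ s` in `P`. Since `Sum.inl` is injective, maximality transfers in both directions.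
-/

section CombinedFramework

variable {L T : Type} {src : L → Set T} {C : T → T → Prop} {supp : L → T → Set T}

def CConsistent (src : L → Set T) (C : T → T → Prop) (supp : L → T → Set T) (P : Set T) :
    Prop :=
  (∀ s ∈ P, ∀ t ∈ P, ¬ C s t) ∧ ∀ ℓ, ∀ s ∈ P, s ∈ src ℓ → ∃ u ∈ supp ℓ s, u ∈ P

theorem cRepair_iff {P : Set T} :
    CRepair src C supp P ↔
      CConsistent src C supp P ∧ ∀ P', CConsistent src C supp P' → P ⊆ P' → P' = P :=
  Iff.rfl

theorem admissible_image_inl_iff (hsym : ∀ s t, C s t ↔ C t s) {P : Set T} :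
    Admissible (CAtt src C supp) ((Sum.inl : T → CArg src) '' P) ↔
      CConsistent src C supp P := by
  constructor
  · rintro ⟨hcf, hdef⟩
    refine ⟨fun s hs t ht => hcf _ ⟨s, hs, rfl⟩ _ ⟨t, ht, rfl⟩, fun ℓ s hs hsrc => ?_⟩
    obtain ⟨_, ⟨u, hu, rfl⟩, hsupp⟩ := hdef _ ⟨s, hs, rfl⟩ (Sum.inr ⟨(ℓ, s), hsrc⟩) rfl
    exact ⟨u, hsupp, hu⟩
  · rintro ⟨hindep, hclosed⟩
    refine ⟨?_, ?_⟩
    · rintro _ ⟨s, hs, rfl⟩ _ ⟨t, ht, rfl⟩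
      exact hindep s hs t ht
    · rintro _ ⟨t, ht, rfl⟩ (u | ⟨⟨ℓ, s⟩, hsrc⟩) hatt
      · exact ⟨Sum.inl t, ⟨t, ht, rfl⟩, (hsym t u).2 hatt⟩
      · obtain rfl : t = s := hatt
        obtain ⟨u, hsupp, hu⟩ := hclosed ℓ t ht hsrc
        exact ⟨Sum.inl u, ⟨u, hu, rfl⟩, hsupp⟩

theorem ConflictFree.eq_image_inl {S : Set (CArg src)} (h : ConflictFree (CAtt src C supp) S) :
    S = Sum.inl '' (Sum.inl ⁻¹' S) := by
  refine (Set.image_preimage_eq_of_subset fun x hx => ?_).symm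
  rcases x with t | _
  · exact ⟨t, rfl⟩
  · exact absurd rfl (h _ hx _ hx)

end CombinedFramework

theorem stmt16_general {L T : Type}
    (src : L → Set T) (C : T → T → Prop) (supp : L → T → Set T)
    (hsym : ∀ s t, C s t ↔ C t s) (P : Set T) :
    CRepair src C supp P ↔
      Preferred (CAtt src C supp) ((Sum.inl : T → CArg src) '' P) := by
  rw [cRepair_iff]
  constructor
  · rintro ⟨hP, hmax⟩
    refine ⟨(admissible_image_inl_iff hsym).2 hP, fun S hS hPS => ?_⟩
    obtain ⟨Q, rfl⟩ : ∃ Q, S = Sum.inl '' Q := ⟨_, hS.1.eq_image_inl⟩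
    exact congrArg _ (hmax Q ((admissible_image_inl_iff hsym).1 hS)
      ((Set.image_subset_image_iff Sum.inl_injective).1 hPS))
  · rintro ⟨hadm, hmax⟩
    refine ⟨(admissible_image_inl_iff hsym).1 hadm, fun Q hQ hPQ => ?_⟩
    exact Sum.inl_injective.image_injective
      (hmax _ ((admissible_image_inl_iff hsym).2 hQ) (Set.image_mono hPQ))

/-- In the combined FD+ID framework, the subset-maximal repairs are exactly the
preferred extensions of the generated AF. -/
theorem stmt16 {L T : Type} [Fintype L] [Fintype T]
    (src : L → Set T) (C : T → T → Prop) (supp : L → T → Set T)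
    (hsym : ∀ s t, C s t ↔ C t s) (hirr : ∀ s, ¬ C s s) (P : Set T) :
    CRepair src C supp P ↔
      Preferred (CAtt src C supp) ((Sum.inl : T → CArg src) '' P) :=
  stmt16_general src C supp hsym P
end

section
/- In the combined FD+ID framework above, naive extensions need not be preferred: there exists a finite instance (T, C, L, src, supp) such that the induced AF has a naive extension restricted to T that is not an admissible set, i.e., the class of maximal conflict-free sets strictly contains the class of preferred extensions. -/
/-- In the combined FD+ID framework, naive extensions need not be preferred:
there is a finite instance whose induced AF has a (fact-only) naive extension
that is not even admissible. -/
theorem stmt17 :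
    ∃ (C : Fin 3 → Fin 3 → Prop) (src : Unit → Set (Fin 3))
      (supp : Unit → Fin 3 → Set (Fin 3)),
      (∀ s t, C s t ↔ C t s) ∧ (∀ s, ¬ C s s) ∧
      ∃ P : Set (Fin 3),
        Naive (CAtt src C supp) ((Sum.inl : Fin 3 → CArg src) '' P) ∧
        ¬ Admissible (CAtt src C supp) ((Sum.inl : Fin 3 → CArg src) '' P) ∧
        ¬ Preferred (CAtt src C supp) ((Sum.inl : Fin 3 → CArg src) '' P) := by

  refine ⟨fun s t => (s = 0 ∧ t = 1) ∨ (s = 1 ∧ t = 0) ∨ (s = 1 ∧ t = 2) ∨ (s = 2 ∧ t = 1),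
    fun _ => Set.univ, fun _ s => if s = 2 then {0} else {1}, ?_, ?_, {0, 2}, ?_, ?_, ?_⟩
  · intro s t; constructor <;> (rintro (⟨h1,h2⟩|⟨h1,h2⟩|⟨h1,h2⟩|⟨h1,h2⟩) <;> subst h1 <;> subst h2 <;> simp)
  · intro s; fin_cases s <;> simp
  · constructor
    · rintro x ⟨a, ha, rfl⟩ y ⟨b, hb, rfl⟩ hab
      simp only [Set.mem_insert_iff, Set.mem_singleton_iff] at ha hb
      rcases ha with rfl|rfl <;> rcases hb with rfl|rfl <;> simp_all [CAtt]
    · intro S' hcf hsub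
      ext x
      constructor
      · intro hx
        match x with
        | Sum.inr a => exact absurd (hcf _ hx _ hx rfl) (by simp)
        | Sum.inl t =>
          fin_cases t
          · exact ⟨0, by simp, rfl⟩
          · exfalso
            have h0 : (Sum.inl 0 : CArg (fun _ : Unit => (Set.univ : Set (Fin 3)))) ∈ S' :=
              hsub ⟨0, by simp, rfl⟩
            exact hcf _ h0 _ hx (by left; exact ⟨rfl, rfl⟩)
          · exact ⟨2, by simp, rfl⟩
      · intro hx; exact hsub hx
  · rintro ⟨hcf, hdef⟩
    have h0 : (Sum.inl 0 : CArg (fun _ : Unit => (Set.univ : Set (Fin 3)))) ∈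
        (Sum.inl '' ({0, 2} : Set (Fin 3))) := ⟨0, by simp, rfl⟩
    obtain ⟨a, ⟨b, hb, rfl⟩, hatt⟩ :=
      hdef _ h0 (Sum.inr ⟨((), 0), by simp⟩) rfl
    simp only [Set.mem_insert_iff, Set.mem_singleton_iff] at hb
    have : b ∈ (if (0 : Fin 3) = 2 then ({0} : Set (Fin 3)) else {1}) := hatt
    rcases hb with rfl|rfl <;> simp at this
  · rintro ⟨hadm, _⟩
    exact (by rintro ⟨hcf, hdef⟩
              have h0 : (Sum.inl 0 : CArg (fun _ : Unit => (Set.univ : Set (Fin 3)))) ∈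
                  (Sum.inl '' ({0, 2} : Set (Fin 3))) := ⟨0, by simp, rfl⟩
              obtain ⟨a, ⟨b, hb, rfl⟩, hatt⟩ :=
                hdef _ h0 (Sum.inr ⟨((), 0), by simp⟩) rfl
              simp only [Set.mem_insert_iff, Set.mem_singleton_iff] at hb
              have : b ∈ (if (0 : Fin 3) = 2 then ({0} : Set (Fin 3)) else {1}) := hatt
              rcases hb with rfl|rfl <;> simp at this : ¬ _) hadm
end
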